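/- arXiv:math/0111059 — 4 statements merged into one kernel-verified Lean document; each statement's English description precedes it below -/
import Mathlib

section
/- For all integers n ≥ k ≥ 1 and every π ∈ P(n,k), one has mak(π) = lmak'(π), i.e. ros(π) + lcs(π) = n(k−1) − (lcb(π) + rob(π)). -/
open Finset Polynomial

/-- A partition of `[n] = {1,…,n}` into `k` nonempty blocks `B₁-⋯-B_k`, indexed so that
`min B₁ < ⋯ < min B_k`, encoded by its restricted-growth word `w : Fin n → Fin k`
(the element `i+1` of `[n]` lies in the block `B_{w i + 1}`). -/
structure SetPartition (n k : ℕ) where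
  w : Fin n → Fin k
  surj : Function.Surjective w
  rgf : ∀ i : Fin n, ∀ c : Fin k, c < w i → ∃ j : Fin n, j < i ∧ w j = c

namespace SetPartition

variable {n k : ℕ}

instance : DecidableEq (SetPartition n k) := fun a b =>
  decidable_of_iff (a.w = b.w) (by cases a; cases b; simp)

noncomputable instance : Fintype (SetPartition n k) :=
  Fintype.ofInjective (fun π => π.w) (fun a b h => by cases a; cases b; simp_all)

/-- The set of openers (smallest elements of their blocks). -/
def openers (π : SetPartition n k) : Finset (Fin n) :=
  univ.filter fun i => ∀ j, j < i → π.w j ≠ π.w i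

/-- The set of closers (largest elements of their blocks). -/
def closers (π : SetPartition n k) : Finset (Fin n) :=
  univ.filter fun i => ∀ j, i < j → π.w j ≠ π.w i

/-- Closers that are not openers (`F_s`). -/
def closersOnly (π : SetPartition n k) : Finset (Fin n) := π.closers \ π.openers

/-- Openers that are not closers (`O_s`). -/
def openersOnly (π : SetPartition n k) : Finset (Fin n) := π.openers \ π.closers

/-- Elements that are neither openers nor closers (`P`, the transients). -/
def transients (π : SetPartition n k) : Finset (Fin n) :=
  univ \ (π.openers ∪ π.closers)

def ros (π : SetPartition n k) : ℕ :=
  ∑ i, (π.openers.filter fun j => j < i ∧ π.w i < π.w j).card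
def rob (π : SetPartition n k) : ℕ :=
  ∑ i, (π.openers.filter fun j => i < j ∧ π.w i < π.w j).card
def rcs (π : SetPartition n k) : ℕ :=
  ∑ i, (π.closers.filter fun j => j < i ∧ π.w i < π.w j).card
def rcb (π : SetPartition n k) : ℕ :=
  ∑ i, (π.closers.filter fun j => i < j ∧ π.w i < π.w j).card
def los (π : SetPartition n k) : ℕ :=
  ∑ i, (π.openers.filter fun j => j < i ∧ π.w j < π.w i).card
def lob (π : SetPartition n k) : ℕ :=
  ∑ i, (π.openers.filter fun j => i < j ∧ π.w j < π.w i).card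
def lcs (π : SetPartition n k) : ℕ :=
  ∑ i, (π.closers.filter fun j => j < i ∧ π.w j < π.w i).card
def lcb (π : SetPartition n k) : ℕ :=
  ∑ i, (π.closers.filter fun j => i < j ∧ π.w j < π.w i).card

def mak (π : SetPartition n k) : ℕ := π.ros + π.lcs
def mak' (π : SetPartition n k) : ℕ := π.lob + π.rcb
def lmak (π : SetPartition n k) : ℤ :=
  (n : ℤ) * ((k : ℤ) - 1) - ((π.los : ℤ) + (π.rcs : ℤ))
def lmak' (π : SetPartition n k) : ℤ :=
  (n : ℤ) * ((k : ℤ) - 1) - ((π.lcb : ℤ) + (π.rob : ℤ))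

/-- `rinv(b,π) = #{a : a < b, w_a > w_b}`. -/
def rinv (π : SetPartition n k) (b : Fin n) : ℕ :=
  (univ.filter fun a => a < b ∧ π.w b < π.w a).card

/-- `nrinv(b,π) = #{a : a > b, w_a > w_b}`. -/
def nrinv (π : SetPartition n k) (b : Fin n) : ℕ :=
  (univ.filter fun a => b < a ∧ π.w b < π.w a).card

/-- `linv(b,π) = #{a : a > b, w_a < w_b}`. -/
def linv (π : SetPartition n k) (b : Fin n) : ℕ :=
  (univ.filter fun a => b < a ∧ π.w a < π.w b).card

/-- `rinv(X,π) = Σ_{b ∈ X} rinv(b,π)`. -/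
def rinvSet (π : SetPartition n k) (X : Finset (Fin n)) : ℕ := ∑ b ∈ X, π.rinv b

/-- `linv(X,π) = Σ_{b ∈ X} linv(b,π)`. -/
def linvSet (π : SetPartition n k) (X : Finset (Fin n)) : ℕ := ∑ b ∈ X, π.linv b

/-- `g(B_c)`: the largest element of the block with index `c`. -/
def blockMax (π : SetPartition n k) (c : Fin k) : Fin n :=
  (univ.filter fun i => π.w i = c).max' (by
    obtain ⟨i, hi⟩ := π.surj c
    exact ⟨i, mem_filter.2 ⟨mem_univ i, hi⟩⟩)

/-- The block with index `c` is incomplete at stage `m`, i.e. it meets the first `m`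
elements of `[n]` but is not contained in them. -/
def IncompleteAt (π : SetPartition n k) (m : ℕ) (c : Fin k) : Prop :=
  (∃ j : Fin n, (j : ℕ) < m ∧ π.w j = c) ∧ ∃ j : Fin n, m ≤ (j : ℕ) ∧ π.w j = c

instance (π : SetPartition n k) (m : ℕ) : DecidablePred (π.IncompleteAt m) := fun c =>
  inferInstanceAs (Decidable
    ((∃ j : Fin n, (j : ℕ) < m ∧ π.w j = c) ∧ ∃ j : Fin n, m ≤ (j : ℕ) ∧ π.w j = c))

/-- `l_i(π)`: the number of blocks incomplete at stage `i-1`; here the element `i` of `[n]`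
is represented by the index `i - 1 : Fin n`, so the first `i - 1` elements are those with
index `< i`. -/
def lTrace (π : SetPartition n k) (i : Fin n) : ℕ :=
  (univ.filter fun c => π.IncompleteAt (i : ℕ) c).card

/-- `γ_i(π)`: one plus the number of blocks incomplete at stage `i` lying to the left of the
block containing `i`. -/
def gammaTrace (π : SetPartition n k) (i : Fin n) : ℕ :=
  1 + (univ.filter fun c => π.IncompleteAt ((i : ℕ) + 1) c ∧ c < π.w i).card

end SetPartition

/-- The `q`-Stirling numbers of the second kind `S_q(n,k) ∈ ℤ[q]`, with
`S_q(n,k) = q^{k-1} S_q(n-1,k-1) + [k]_q S_q(n-1,k)`, `S_q(0,0) = 1`, and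
`S_q(n,k) = 0` when exactly one of `n,k` is zero (whence also for `k > n`). -/
noncomputable def qStirling : ℕ → ℕ → Polynomial ℤ
  | 0, 0 => 1
  | 0, _ + 1 => 0
  | _ + 1, 0 => 0
  | n + 1, k + 1 =>
      X ^ k * qStirling n k + (∑ i ∈ Finset.range (k + 1), X ^ i) * qStirling n (k + 1)

/-!
Each block has exactly one opener and one closer. Hence, for fixed `i`, the openers `j` with
`w_j > w_i` together with the closers `j` with `w_j < w_i` correspond bijectively to the `k - 1`
blocks other than the one containing `i`, whichever side of `i` they lie on:
`ros_i + rob_i + lcs_i + lcb_i = k - 1`. Summing over `i` gives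
`ros + rob + lcs + lcb = n (k - 1)`, which rearranges to the theorem.
-/

theorem Finset.card_filter_lt_add_card_filter_gt {α : Type*} [LinearOrder α] (s : Finset α)
    {p : α → Prop} [DecidablePred p] {i : α} (hi : ¬p i) :
    #(s.filter fun j => j < i ∧ p j) + #(s.filter fun j => i < j ∧ p j) = #(s.filter p) := by
  rw [← card_filter_add_card_filter_not (s := s.filter p) (fun j => j < i), filter_filter,
    filter_filter]
  congr 2
  · ext j; simp only [mem_filter, and_comm]
  · ext j
    simp only [mem_filter, and_congr_right_iff]
    intro _
    constructor
    · rintro ⟨hij, hj⟩; exact ⟨hj, hij.not_gt⟩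
    · rintro ⟨hj, hji⟩
      exact ⟨(not_lt.1 hji).lt_of_ne fun h => hi (h ▸ hj), hj⟩

theorem Finset.card_filter_comp_eq_of_injOn {α β : Type*} [Fintype β] [DecidableEq β]
    {s : Finset α} {f : α → β} (hinj : Set.InjOn f s) (hsurj : ∀ b, ∃ a ∈ s, f a = b)
    (p : β → Prop) [DecidablePred p] :
    #(s.filter fun a => p (f a)) = #(univ.filter p) := by
  have himage : s.image f = univ := eq_univ_of_forall fun b => by simpa using hsurj b
  rw [← card_image_of_injOn (hinj.mono (coe_subset.2 (filter_subset _ _))), ← filter_image,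
    himage]

namespace SetPartition

variable {n k : ℕ}

theorem injOn_w_openers (π : SetPartition n k) : Set.InjOn π.w π.openers := by
  intro a ha b hb hab
  simp only [openers, coe_filter, mem_univ, true_and, Set.mem_ofPred_eq] at ha hb
  by_contra hne
  rcases lt_or_gt_of_ne hne with h | h
  exacts [hb a h hab, ha b h hab.symm]

theorem injOn_w_closers (π : SetPartition n k) : Set.InjOn π.w π.closers := by
  intro a ha b hb hab
  simp only [closers, coe_filter, mem_univ, true_and, Set.mem_ofPred_eq] at ha hb
  by_contra hne
  rcases lt_or_gt_of_ne hne with h | h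
  exacts [ha b h hab.symm, hb a h hab]

theorem exists_mem_openers_w_eq (π : SetPartition n k) (c : Fin k) :
    ∃ i ∈ π.openers, π.w i = c := by
  obtain ⟨i₀, hi₀⟩ := π.surj c
  obtain ⟨i, hi, hmin⟩ := (univ.filter fun i => π.w i = c).exists_min_image id
    ⟨i₀, by simpa using hi₀⟩
  simp only [mem_filter, mem_univ, true_and, id] at hi hmin
  refine ⟨i, mem_filter.2 ⟨mem_univ _, fun j hj hw => ?_⟩, hi⟩
  exact (hmin j (hw.trans hi)).not_gt hj

theorem exists_mem_closers_w_eq (π : SetPartition n k) (c : Fin k) :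
    ∃ i ∈ π.closers, π.w i = c := by
  obtain ⟨i₀, hi₀⟩ := π.surj c
  obtain ⟨i, hi, hmax⟩ := (univ.filter fun i => π.w i = c).exists_max_image id
    ⟨i₀, by simpa using hi₀⟩
  simp only [mem_filter, mem_univ, true_and, id] at hi hmax
  refine ⟨i, mem_filter.2 ⟨mem_univ _, fun j hj hw => ?_⟩, hi⟩
  exact (hmax j (hw.trans hi)).not_gt hj

theorem card_openers_add_card_closers_add_one (π : SetPartition n k) (i : Fin n) :
    #(π.openers.filter fun j => j < i ∧ π.w i < π.w j)
      + #(π.openers.filter fun j => i < j ∧ π.w i < π.w j)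
      + (#(π.closers.filter fun j => j < i ∧ π.w j < π.w i)
        + #(π.closers.filter fun j => i < j ∧ π.w j < π.w i)) + 1 = k := by
  rw [card_filter_lt_add_card_filter_gt _ (p := (π.w i < π.w ·)) (lt_irrefl _),
    card_filter_lt_add_card_filter_gt _ (p := (π.w · < π.w i)) (lt_irrefl _),
    card_filter_comp_eq_of_injOn π.injOn_w_openers π.exists_mem_openers_w_eq (π.w i < ·),
    card_filter_comp_eq_of_injOn π.injOn_w_closers π.exists_mem_closers_w_eq (· < π.w i),
    filter_lt_eq_Ioi, filter_gt_eq_Iio, Fin.card_Ioi, Fin.card_Iio]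
  have := (π.w i).isLt
  omega

theorem ros_add_rob_add_lcs_add_lcb_add_n (π : SetPartition n k) :
    π.ros + π.rob + (π.lcs + π.lcb) + n = n * k := by
  have h := sum_congr rfl fun i (_ : i ∈ univ) => π.card_openers_add_card_closers_add_one i
  simp only [sum_add_distrib, sum_const, card_univ, Fintype.card_fin, smul_eq_mul,
    mul_one] at h
  simp only [ros, rob, lcs, lcb]
  omega

end SetPartition

theorem mak_eq_lmak'_general (n k : ℕ) (π : SetPartition n k) :
    ((π.ros : ℤ) + π.lcs = (n : ℤ) * ((k : ℤ) - 1) - ((π.lcb : ℤ) + π.rob)) ∧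
    (π.mak : ℤ) = π.lmak' := by
  have hsum : (π.ros + π.rob + (π.lcs + π.lcb) + n : ℤ) = n * k := by
    exact_mod_cast π.ros_add_rob_add_lcs_add_lcb_add_n
  have hros : (π.ros : ℤ) + π.lcs = n * (k - 1) - (π.lcb + π.rob) := by linear_combination hsum
  exact ⟨hros, by simpa [SetPartition.mak, SetPartition.lmak'] using hros⟩

/-- For all integers `n ≥ k ≥ 1` and every `π ∈ P(n,k)`,
`mak(π) = lmak'(π)`, i.e. `ros(π) + lcs(π) = n(k-1) - (lcb(π) + rob(π))`. -/
theorem mak_eq_lmak' (n k : ℕ) (hk : 1 ≤ k) (hkn : k ≤ n) (π : SetPartition n k) :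
    ((π.ros : ℤ) + π.lcs = (n : ℤ) * ((k : ℤ) - 1) - ((π.lcb : ℤ) + π.rob)) ∧
    (π.mak : ℤ) = π.lmak' :=
  mak_eq_lmak'_general n k π
end

section
/- For all integers n ≥ k ≥ 1 and every l with 1 ≤ l ≤ k, the generating function of the statistic mak_l over P(n,k) equals the q-Stirling number of the second kind: Σ_{π∈P(n,k)} q^{mak_l(π)} = S_q(n,k) for every real q > 0 (the exponents mak_l(π) being integers). -/
open Finset Polynomial

/-! Write `mak = ros + ∑_c nrinv(g(B_c))` and, for a set `A` of block
indices, let `makSet A` be the same sum with the term of every block `c ∈ A` replaced by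
`k - 1 - c`; thus `mak_l = makSet {l - 1}`. Removing `n + 1` from `ρ ∈ P(n+1,k+1)` either deletes
a singleton last block, which lowers `makSet A` by `k` (every surviving term `nrinv(g(B_c))` and
every `k - 1 - c` drops by one), or removes `n + 1` from the block `j`, which lowers `makSet A`
by `appendShift A j` and turns `A` into `A ∪ {j}`. As `j` runs over the blocks, these shifts run
over `0, …, k`, so for every `A` the generating polynomial of `makSet A` obeys the recursion of
`S_q(n,k)`.
-/

theorem Finset.card_filter_lt_lt_card_filter_lt {α : Type*} [LinearOrder α] {s : Finset α}
    {a b : α} (ha : a ∈ s) (hab : a < b) : #{x ∈ s | x < a} < #{x ∈ s | x < b} := by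
  refine card_lt_card ⟨fun x hx => ?_, fun h => ?_⟩
  · simp only [mem_filter] at hx ⊢
    exact ⟨hx.1, hx.2.trans hab⟩
  · exact lt_irrefl a (mem_filter.1 (h (mem_filter.2 ⟨ha, hab⟩))).2

theorem Finset.injOn_card_filter_lt {α : Type*} [LinearOrder α] (s : Finset α) :
    Set.InjOn (fun a => #{x ∈ s | x < a}) s :=
  StrictMonoOn.injOn fun _ ha _ _ hab => card_filter_lt_lt_card_filter_lt ha hab

theorem Finset.card_filter_lt_lt_card {α : Type*} [LinearOrder α] {s : Finset α} {a : α}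
    (ha : a ∈ s) : #{x ∈ s | x < a} < #s :=
  card_lt_card (filter_ssubset.2 ⟨a, ha, lt_irrefl a⟩)

theorem Fin.card_filter_lt_add_card_filter_lt_compl {k : ℕ} (A : Finset (Fin k)) (j : Fin k) :
    #{x ∈ A | x < j} + #{x ∈ Aᶜ | x < j} = j := by
  rw [← card_union_of_disjoint (disjoint_filter_filter disjoint_compl_right), ← filter_union,
    union_compl, filter_gt_eq_Iio, Fin.card_Iio]

theorem Fin.sum_comp_eq_sum_range {M : Type*} [AddCommMonoid M] {k : ℕ} {e : Fin k → ℕ}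
    (he : Function.Injective e) (hlt : ∀ j, e j < k) (f : ℕ → M) :
    ∑ j, f (e j) = ∑ i ∈ range k, f i := by
  let e' : Fin k → Fin k := fun j => ⟨e j, hlt j⟩
  have he' : e'.Bijective :=
    Finite.injective_iff_bijective.1 fun a b h => he (congrArg Fin.val h)
  rw [← Fin.sum_univ_eq_sum_range]
  exact he'.sum_comp (fun i : Fin k => f i)

namespace SetPartition

variable {n k : ℕ}

@[ext] theorem ext {π π' : SetPartition n k} (h : π.w = π'.w) : π = π' := by
  cases π; cases π'; simpa using h

theorem block_nonempty (π : SetPartition n k) (c : Fin k) :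
    (univ.filter fun i => π.w i = c).Nonempty := by
  obtain ⟨i, hi⟩ := π.surj c
  exact ⟨i, mem_filter.2 ⟨mem_univ i, hi⟩⟩

def blockMin (π : SetPartition n k) (c : Fin k) : Fin n :=
  (univ.filter fun i => π.w i = c).min' (π.block_nonempty c)

theorem w_blockMin (π : SetPartition n k) (c : Fin k) : π.w (π.blockMin c) = c :=
  (mem_filter.1 (min'_mem _ (π.block_nonempty c))).2

theorem blockMin_le (π : SetPartition n k) {i : Fin n} : π.blockMin (π.w i) ≤ i :=
  min'_le (univ.filter fun j => π.w j = π.w i) i (mem_filter.2 ⟨mem_univ i, rfl⟩)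

theorem blockMin_eq {π : SetPartition n k} {c : Fin k} {i : Fin n} (hi : π.w i = c)
    (hmin : ∀ j, π.w j = c → i ≤ j) : π.blockMin c = i :=
  le_antisymm (hi ▸ π.blockMin_le) (hmin _ (π.w_blockMin c))

theorem w_blockMax (π : SetPartition n k) (c : Fin k) : π.w (π.blockMax c) = c :=
  (mem_filter.1 (max'_mem _ (π.block_nonempty c))).2

theorem le_blockMax (π : SetPartition n k) {i : Fin n} : i ≤ π.blockMax (π.w i) :=
  le_max' (univ.filter fun j => π.w j = π.w i) i (mem_filter.2 ⟨mem_univ i, rfl⟩)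

theorem blockMax_eq {π : SetPartition n k} {c : Fin k} {i : Fin n} (hi : π.w i = c)
    (hmax : ∀ j, π.w j = c → j ≤ i) : π.blockMax c = i :=
  le_antisymm (hmax _ (π.w_blockMax c)) (hi ▸ π.le_blockMax)

theorem openers_eq_image (π : SetPartition n k) : π.openers = univ.image π.blockMin := by
  ext i
  simp only [openers, mem_filter, mem_univ, true_and, mem_image]
  refine ⟨fun h => ⟨π.w i, blockMin_eq rfl fun j hj => not_lt.1 fun hji => h j hji hj⟩, ?_⟩
  rintro ⟨c, rfl⟩ j hj hw
  exact not_lt.2 (π.blockMin_le (i := j)) (by rwa [hw, w_blockMin])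

theorem closers_eq_image (π : SetPartition n k) : π.closers = univ.image π.blockMax := by
  ext i
  simp only [closers, mem_filter, mem_univ, true_and, mem_image]
  refine ⟨fun h => ⟨π.w i, blockMax_eq rfl fun j hj => not_lt.1 fun hij => h j hij hj⟩, ?_⟩
  rintro ⟨c, rfl⟩ j hj hw
  exact not_lt.2 (π.le_blockMax (i := j)) (by rwa [hw, w_blockMax])

theorem sum_openers {M : Type*} [AddCommMonoid M] (π : SetPartition n k) (f : Fin n → M) :
    ∑ i ∈ π.openers, f i = ∑ c, f (π.blockMin c) := by
  rw [openers_eq_image, sum_image]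
  intro a _ b _ h
  rw [← π.w_blockMin a, h, w_blockMin]

theorem sum_closers {M : Type*} [AddCommMonoid M] (π : SetPartition n k) (f : Fin n → M) :
    ∑ i ∈ π.closers, f i = ∑ c, f (π.blockMax c) := by
  rw [closers_eq_image, sum_image]
  intro a _ b _ h
  rw [← π.w_blockMax a, h, w_blockMax]

theorem ros_eq_sum_linv (π : SetPartition n k) : π.ros = ∑ c, π.linv (π.blockMin c) := by
  simp only [ros, linv, card_filter]
  rw [sum_comm, sum_openers]

theorem lcs_eq_sum_nrinv (π : SetPartition n k) : π.lcs = ∑ c, π.nrinv (π.blockMax c) := by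
  simp only [lcs, nrinv, card_filter]
  rw [sum_comm, sum_closers]

def appendToBlock (π : SetPartition n k) (j : Fin k) : SetPartition (n + 1) k where
  w := Fin.snoc π.w j
  surj c := by
    obtain ⟨i, hi⟩ := π.surj c
    exact ⟨i.castSucc, by simpa using hi⟩
  rgf i c := by
    refine Fin.lastCases (fun _ => ?_) (fun i hc => ?_) i
    · obtain ⟨i, hi⟩ := π.surj c
      exact ⟨i.castSucc, Fin.castSucc_lt_last i, by simpa using hi⟩
    · obtain ⟨j', hj', hw⟩ := π.rgf i c (by simpa using hc)
      exact ⟨j'.castSucc, by simpa using hj', by simpa using hw⟩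

def appendNewBlock (π : SetPartition n k) : SetPartition (n + 1) (k + 1) where
  w := Fin.snoc (fun i => (π.w i).castSucc) (Fin.last k)
  surj c := by
    refine Fin.lastCases ⟨Fin.last n, by simp⟩ (fun c => ?_) c
    obtain ⟨i, hi⟩ := π.surj c
    exact ⟨i.castSucc, by simp [hi]⟩
  rgf i c hc := by
    obtain ⟨c, rfl⟩ := Fin.exists_castSucc_eq.2 (hc.trans_le (Fin.le_last _)).ne
    revert hc
    refine Fin.lastCases (fun _ => ?_) (fun i hc => ?_) i
    · obtain ⟨i, hi⟩ := π.surj c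
      exact ⟨i.castSucc, Fin.castSucc_lt_last i, by simp [hi]⟩
    · obtain ⟨j', hj', hw⟩ := π.rgf i c (by simpa using hc)
      exact ⟨j'.castSucc, by simpa using hj', by simp [hw]⟩

@[simp] theorem appendToBlock_w_castSucc (π : SetPartition n k) (j : Fin k) (i : Fin n) :
    (π.appendToBlock j).w i.castSucc = π.w i := by simp [appendToBlock]

@[simp] theorem appendToBlock_w_last (π : SetPartition n k) (j : Fin k) :
    (π.appendToBlock j).w (Fin.last n) = j := by simp [appendToBlock]

@[simp] theorem appendNewBlock_w_castSucc (π : SetPartition n k) (i : Fin n) :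
    π.appendNewBlock.w i.castSucc = (π.w i).castSucc := by simp [appendNewBlock]

@[simp] theorem appendNewBlock_w_last (π : SetPartition n k) :
    π.appendNewBlock.w (Fin.last n) = Fin.last k := by simp [appendNewBlock]

theorem blockMin_appendToBlock (π : SetPartition n k) (j c : Fin k) :
    (π.appendToBlock j).blockMin c = (π.blockMin c).castSucc := by
  refine blockMin_eq (by simp [w_blockMin]) fun i => Fin.lastCases (fun _ => ?_) (fun i hi => ?_) i
  · exact (Fin.castSucc_lt_last _).le
  · simp only [appendToBlock_w_castSucc] at hi
    exact Fin.castSucc_le_castSucc_iff.2 (hi ▸ π.blockMin_le)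

theorem blockMax_appendToBlock_self (π : SetPartition n k) (j : Fin k) :
    (π.appendToBlock j).blockMax j = Fin.last n :=
  blockMax_eq (by simp) fun i _ => Fin.le_last i

theorem blockMax_appendToBlock_of_ne (π : SetPartition n k) {j c : Fin k} (h : c ≠ j) :
    (π.appendToBlock j).blockMax c = (π.blockMax c).castSucc := by
  refine blockMax_eq (by simp [w_blockMax]) fun i => Fin.lastCases (fun hi => ?_) (fun i hi => ?_) i
  · exact absurd (by simpa using hi.symm) h
  · simp only [appendToBlock_w_castSucc] at hi
    exact Fin.castSucc_le_castSucc_iff.2 (hi ▸ π.le_blockMax)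

theorem blockMin_appendNewBlock_castSucc (π : SetPartition n k) (c : Fin k) :
    π.appendNewBlock.blockMin c.castSucc = (π.blockMin c).castSucc := by
  refine blockMin_eq (by simp [w_blockMin]) fun i => Fin.lastCases (fun _ => ?_) (fun i hi => ?_) i
  · exact (Fin.castSucc_lt_last _).le
  · simp only [appendNewBlock_w_castSucc, Fin.castSucc_inj] at hi
    exact Fin.castSucc_le_castSucc_iff.2 (hi ▸ π.blockMin_le)

theorem blockMin_appendNewBlock_last (π : SetPartition n k) :
    π.appendNewBlock.blockMin (Fin.last k) = Fin.last n := by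
  refine blockMin_eq (by simp) fun i => Fin.lastCases (fun _ => le_rfl) (fun i hi => ?_) i
  exact absurd hi (by simp)

theorem blockMax_appendNewBlock_castSucc (π : SetPartition n k) (c : Fin k) :
    π.appendNewBlock.blockMax c.castSucc = (π.blockMax c).castSucc := by
  refine blockMax_eq (by simp [w_blockMax]) fun i => Fin.lastCases (fun hi => ?_) (fun i hi => ?_) i
  · exact absurd hi (by simpa using (Fin.castSucc_lt_last _).ne')
  · simp only [appendNewBlock_w_castSucc, Fin.castSucc_inj] at hi
    exact Fin.castSucc_le_castSucc_iff.2 (hi ▸ π.le_blockMax)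

theorem blockMax_appendNewBlock_last (π : SetPartition n k) :
    π.appendNewBlock.blockMax (Fin.last k) = Fin.last n :=
  blockMax_eq (by simp) fun i _ => Fin.le_last i

theorem linv_last (ρ : SetPartition (n + 1) k) : ρ.linv (Fin.last n) = 0 := by
  simp [linv, Fin.le_last, not_lt_of_ge]

theorem nrinv_last (ρ : SetPartition (n + 1) k) : ρ.nrinv (Fin.last n) = 0 := by
  simp [nrinv, Fin.le_last, not_lt_of_ge]

theorem linv_appendToBlock_castSucc (π : SetPartition n k) (j : Fin k) (i : Fin n) :
    (π.appendToBlock j).linv i.castSucc = π.linv i + if j < π.w i then 1 else 0 := by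
  simp only [linv, card_filter, Fin.sum_univ_castSucc]
  simp

theorem nrinv_appendToBlock_castSucc (π : SetPartition n k) (j : Fin k) (i : Fin n) :
    (π.appendToBlock j).nrinv i.castSucc = π.nrinv i + if π.w i < j then 1 else 0 := by
  simp only [nrinv, card_filter, Fin.sum_univ_castSucc]
  simp

theorem linv_appendNewBlock_castSucc (π : SetPartition n k) (i : Fin n) :
    π.appendNewBlock.linv i.castSucc = π.linv i := by
  simp only [linv, card_filter, Fin.sum_univ_castSucc]
  simp [not_lt_of_ge (Fin.le_last _)]

theorem nrinv_appendNewBlock_castSucc (π : SetPartition n k) (i : Fin n) :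
    π.appendNewBlock.nrinv i.castSucc = π.nrinv i + 1 := by
  simp only [nrinv, card_filter, Fin.sum_univ_castSucc]
  simp

theorem ros_appendToBlock (π : SetPartition n k) (j : Fin k) :
    (π.appendToBlock j).ros = π.ros + (k - 1 - j) := by
  simp only [ros_eq_sum_linv, blockMin_appendToBlock, linv_appendToBlock_castSucc, w_blockMin,
    sum_add_distrib, sum_boole, filter_lt_eq_Ioi, Fin.card_Ioi, Nat.cast_id]

theorem ros_appendNewBlock (π : SetPartition n k) : π.appendNewBlock.ros = π.ros := by
  simp [ros_eq_sum_linv, Fin.sum_univ_castSucc, blockMin_appendNewBlock_castSucc,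
    blockMin_appendNewBlock_last, linv_appendNewBlock_castSucc, linv_last]

/-- The increase of `makSet A` when `n + 1` is added to the block with index `j`. -/
def appendShift (A : Finset (Fin k)) (j : Fin k) : ℕ :=
  #{x ∈ Aᶜ | x < j} + if j ∈ A then k - 1 - j else 0

theorem appendShift_of_mem {A : Finset (Fin k)} {j : Fin k} (hj : j ∈ A) :
    appendShift A j = k - 1 - #{x ∈ A | x < j} := by
  have := Fin.card_filter_lt_add_card_filter_lt_compl A j
  have := j.isLt
  rw [appendShift, if_pos hj]
  omega

theorem appendShift_of_notMem {A : Finset (Fin k)} {j : Fin k} (hj : j ∉ A) :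
    appendShift A j = #{x ∈ Aᶜ | x < j} := by
  rw [appendShift, if_neg hj, add_zero]

theorem appendShift_lt (A : Finset (Fin k)) (j : Fin k) : appendShift A j < k := by
  by_cases hj : j ∈ A
  · rw [appendShift_of_mem hj]
    have := j.isLt
    omega
  · rw [appendShift_of_notMem hj]
    exact (card_filter_lt_lt_card (mem_compl.2 hj)).trans_le
      ((card_le_univ _).trans_eq (Fintype.card_fin k))

/-- The shifts of the blocks outside `A` fill `[0, #Aᶜ)`, those of the blocks in `A` fill
`[#Aᶜ, k)`. -/
theorem appendShift_injective (A : Finset (Fin k)) : Function.Injective (appendShift A) := by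
  have hcard : #A + #Aᶜ = k := by rw [card_add_card_compl, Fintype.card_fin]
  have hout {b} (hb : b ∉ A) : appendShift A b < #Aᶜ := by
    rw [appendShift_of_notMem hb]
    exact card_filter_lt_lt_card (mem_compl.2 hb)
  have hin {a} (ha : a ∈ A) : #Aᶜ ≤ appendShift A a := by
    have := card_filter_lt_lt_card ha
    rw [appendShift_of_mem ha]
    omega
  intro a b h
  by_cases ha : a ∈ A <;> by_cases hb : b ∈ A
  · refine A.injOn_card_filter_lt ha hb ?_
    have := card_filter_lt_lt_card ha
    have := card_filter_lt_lt_card hb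
    rw [appendShift_of_mem ha, appendShift_of_mem hb] at h
    dsimp only
    omega
  · exact absurd (h ▸ hin ha) (not_le.2 (hout hb))
  · exact absurd (h ▸ hin hb) (not_le.2 (hout ha))
  · rw [appendShift_of_notMem ha, appendShift_of_notMem hb] at h
    exact Aᶜ.injOn_card_filter_lt (mem_compl.2 ha) (mem_compl.2 hb) h

def closerTerm (π : SetPartition n k) (A : Finset (Fin k)) (c : Fin k) : ℕ :=
  if c ∈ A then k - 1 - c else π.nrinv (π.blockMax c)

def makSet (π : SetPartition n k) (A : Finset (Fin k)) : ℕ :=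
  π.ros + ∑ c, π.closerTerm A c

theorem closerTerm_appendToBlock_self (π : SetPartition n k) (j : Fin k) (A : Finset (Fin k)) :
    (π.appendToBlock j).closerTerm A j = if j ∈ A then k - 1 - j else 0 := by
  simp [closerTerm, blockMax_appendToBlock_self, nrinv_last]

theorem closerTerm_appendToBlock_of_ne (π : SetPartition n k) {j c : Fin k} (h : c ≠ j)
    (A : Finset (Fin k)) :
    (π.appendToBlock j).closerTerm A c
      = π.closerTerm (insert j A) c + if c ∈ Aᶜ ∧ c < j then 1 else 0 := by
  by_cases hc : c ∈ A <;>
    simp [closerTerm, hc, h, blockMax_appendToBlock_of_ne _ h, nrinv_appendToBlock_castSucc,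
      w_blockMax]

theorem closerTerm_appendNewBlock_castSucc (π : SetPartition n k) (A : Finset (Fin (k + 1)))
    (c : Fin k) :
    π.appendNewBlock.closerTerm A c.castSucc
      = π.closerTerm (A.preimage Fin.castSucc (Fin.castSucc_injective k).injOn) c + 1 := by
  have := c.isLt
  by_cases hc : c.castSucc ∈ A
  · simp only [closerTerm, hc, mem_preimage, if_true, Fin.val_castSucc]
    omega
  · simp [closerTerm, hc, blockMax_appendNewBlock_castSucc, nrinv_appendNewBlock_castSucc]

theorem closerTerm_appendNewBlock_last (π : SetPartition n k) (A : Finset (Fin (k + 1))) :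
    π.appendNewBlock.closerTerm A (Fin.last k) = 0 := by
  simp [closerTerm, blockMax_appendNewBlock_last, nrinv_last]

theorem makSet_appendToBlock (π : SetPartition n k) (j : Fin k) (A : Finset (Fin k)) :
    (π.appendToBlock j).makSet A = π.makSet (insert j A) + appendShift A j := by
  have hcount :
      ∑ c ∈ univ.erase j, (if c ∈ Aᶜ ∧ c < j then 1 else 0) = #{x ∈ Aᶜ | x < j} := by
    rw [sum_boole, Nat.cast_id, filter_erase, erase_eq_of_notMem (by simp)]
    congr 1
    ext
    simp
  have hself : π.closerTerm (insert j A) j = k - 1 - j := by simp [closerTerm]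
  simp only [makSet, ros_appendToBlock, appendShift]
  rw [← add_sum_erase _ _ (mem_univ j), ← add_sum_erase _ _ (mem_univ j),
    sum_congr rfl fun c hc => π.closerTerm_appendToBlock_of_ne (ne_of_mem_erase hc) A,
    sum_add_distrib, hcount, closerTerm_appendToBlock_self, hself]
  ring

theorem makSet_appendNewBlock (π : SetPartition n k) (A : Finset (Fin (k + 1))) :
    π.appendNewBlock.makSet A
      = π.makSet (A.preimage Fin.castSucc (Fin.castSucc_injective k).injOn) + k := by
  simp only [makSet, ros_appendNewBlock, Fin.sum_univ_castSucc, closerTerm_appendNewBlock_castSucc,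
    closerTerm_appendNewBlock_last, sum_add_distrib, sum_const, card_univ, Fintype.card_fin,
    smul_eq_mul, mul_one, add_zero]
  ring

theorem makSet_singleton (π : SetPartition n k) (c : Fin k) :
    (π.makSet {c} : ℤ) = π.mak - π.nrinv (π.blockMax c) + (k - 1 - c : ℕ) := by
  have hother : ∀ d ∈ univ.erase c, π.closerTerm {c} d = π.nrinv (π.blockMax d) :=
    fun d hd => if_neg (by simpa using ne_of_mem_erase hd)
  rw [makSet, mak, lcs_eq_sum_nrinv, ← add_sum_erase _ _ (mem_univ c),
    ← add_sum_erase _ _ (mem_univ c), sum_congr rfl hother]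
  simp [closerTerm]
  ring

theorem appendToBlock_injective :
    Function.Injective fun p : SetPartition n k × Fin k => p.1.appendToBlock p.2 := by
  rintro ⟨π, j⟩ ⟨π', j'⟩ h
  have hw := congrArg SetPartition.w h
  refine Prod.ext (ext (funext fun i => ?_)) ?_
  · simpa using congrFun hw i.castSucc
  · simpa using congrFun hw (Fin.last n)

theorem appendNewBlock_injective :
    Function.Injective (appendNewBlock : SetPartition n k → SetPartition (n + 1) (k + 1)) := by
  intro π π' h
  exact ext (funext fun i => by simpa using congrFun (congrArg SetPartition.w h) i.castSucc)

theorem appendToBlock_ne_appendNewBlock (π : SetPartition n (k + 1)) (j : Fin (k + 1))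
    (τ : SetPartition n k) : π.appendToBlock j ≠ τ.appendNewBlock := by
  intro h
  obtain ⟨i, hi⟩ := π.surj j
  have hw := congrArg SetPartition.w h
  have hi' := congrFun hw i.castSucc
  have hlast := congrFun hw (Fin.last n)
  simp only [appendToBlock_w_castSucc, appendNewBlock_w_castSucc, appendToBlock_w_last,
    appendNewBlock_w_last] at hi' hlast
  exact (Fin.castSucc_lt_last (τ.w i)).ne (hi' ▸ hi ▸ hlast)

theorem exists_appendToBlock_eq (ρ : SetPartition (n + 1) k)
    (h : ∃ i : Fin n, ρ.w i.castSucc = ρ.w (Fin.last n)) :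
    ∃ (π : SetPartition n k) (j : Fin k), π.appendToBlock j = ρ := by
  refine ⟨⟨fun i => ρ.w i.castSucc, fun c => ?_, fun i c hc => ?_⟩, ρ.w (Fin.last n), ?_⟩
  · obtain ⟨a, rfl⟩ := ρ.surj c
    refine Fin.lastCases h (fun a => ⟨a, rfl⟩) a
  · obtain ⟨j', hj', hw⟩ := ρ.rgf i.castSucc c hc
    obtain ⟨j, rfl⟩ := Fin.exists_castSucc_eq.2 (hj'.trans_le (Fin.le_last _)).ne
    exact ⟨j, Fin.castSucc_lt_castSucc_iff.1 hj', hw⟩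
  · ext1
    funext i
    exact Fin.lastCases (by simp) (fun i => by simp) i

theorem w_last_eq_last (ρ : SetPartition (n + 1) (k + 1))
    (h : ∀ i : Fin n, ρ.w i.castSucc ≠ ρ.w (Fin.last n)) :
    ρ.w (Fin.last n) = Fin.last k := by
  by_contra hne
  obtain ⟨a, ha⟩ := ρ.surj (Fin.last k)
  obtain ⟨j, hj, hw⟩ := ρ.rgf a _ (ha ▸ Fin.lt_last_iff_ne_last.2 hne)
  obtain ⟨j, rfl⟩ := Fin.exists_castSucc_eq.2 (hj.trans_le (Fin.le_last _)).ne
  exact h j hw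

theorem exists_appendNewBlock_eq (ρ : SetPartition (n + 1) (k + 1))
    (h : ∀ i : Fin n, ρ.w i.castSucc ≠ ρ.w (Fin.last n)) :
    ∃ π : SetPartition n k, π.appendNewBlock = ρ := by
  have hlast := ρ.w_last_eq_last h
  have hcs (i : Fin n) : ρ.w i.castSucc ≠ Fin.last k := hlast ▸ h i
  refine ⟨⟨fun i => (ρ.w i.castSucc).castPred (hcs i), fun c => ?_, fun i c hc => ?_⟩, ?_⟩
  · obtain ⟨a, ha⟩ := ρ.surj c.castSucc
    have hne : a ≠ Fin.last n := by
      rintro rfl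
      exact (Fin.castSucc_lt_last c).ne (ha.symm.trans hlast)
    obtain ⟨a, rfl⟩ := Fin.exists_castSucc_eq.2 hne
    exact ⟨a, Fin.castSucc_injective _ (by simpa using ha)⟩
  · obtain ⟨j', hj', hw⟩ :=
      ρ.rgf i.castSucc c.castSucc (by simpa [Fin.lt_castPred_iff] using hc)
    obtain ⟨j, rfl⟩ := Fin.exists_castSucc_eq.2 (hj'.trans_le (Fin.le_last _)).ne
    exact ⟨j, Fin.castSucc_lt_castSucc_iff.1 hj', Fin.castSucc_injective _ (by simpa using hw)⟩
  · ext1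
    funext i
    exact Fin.lastCases (by simp [hlast]) (fun i => by simp) i

theorem sum_univ_succ_succ {M : Type*} [AddCommMonoid M] (f : SetPartition (n + 1) (k + 1) → M) :
    ∑ ρ, f ρ = ∑ π : SetPartition n (k + 1), ∑ j, f (π.appendToBlock j)
      + ∑ π : SetPartition n k, f π.appendNewBlock := by
  have hbij : Function.Bijective
      (Sum.elim (fun p : SetPartition n (k + 1) × Fin (k + 1) => p.1.appendToBlock p.2)
        appendNewBlock) := by
    refine ⟨appendToBlock_injective.sumElim appendNewBlock_injective
      fun p τ => appendToBlock_ne_appendNewBlock p.1 p.2 τ, fun ρ => ?_⟩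
    by_cases h : ∃ i : Fin n, ρ.w i.castSucc = ρ.w (Fin.last n)
    · obtain ⟨π, j, hπ⟩ := ρ.exists_appendToBlock_eq h
      exact ⟨Sum.inl (π, j), hπ⟩
    · obtain ⟨π, hπ⟩ := ρ.exists_appendNewBlock_eq (by simpa using h)
      exact ⟨Sum.inr π, hπ⟩
  rw [← hbij.sum_comp, Fintype.sum_sum_type, Fintype.sum_prod_type]
  rfl

instance : Unique (SetPartition 0 0) where
  default := ⟨Fin.elim0, fun c => c.elim0, fun i => i.elim0⟩
  uniq _ := ext (funext fun i => i.elim0)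

instance (k : ℕ) : IsEmpty (SetPartition 0 (k + 1)) :=
  ⟨fun π => (π.surj 0).choose.elim0⟩

instance (n : ℕ) : IsEmpty (SetPartition (n + 1) 0) :=
  ⟨fun π => (π.w 0).elim0⟩

theorem sum_X_pow_makSet (n k : ℕ) (A : Finset (Fin k)) :
    ∑ π : SetPartition n k, (X : ℤ[X]) ^ π.makSet A = qStirling n k := by
  induction n generalizing k with
  | zero =>
    cases k with
    | zero => simp [qStirling, makSet, ros]
    | succ k => simp [qStirling]
  | succ n ih =>
    cases k with
    | zero => simp [qStirling]
    | succ k =>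
      have hnew :
          ∑ π : SetPartition n (k + 1), ∑ j, (X : ℤ[X]) ^ (π.appendToBlock j).makSet A
          = (∑ i ∈ range (k + 1), X ^ i) * qStirling n (k + 1) := by
        simp only [makSet_appendToBlock, pow_add]
        rw [sum_comm, ← Fin.sum_comp_eq_sum_range (appendShift_injective A) (appendShift_lt A),
          sum_mul]
        exact sum_congr rfl fun j _ => by rw [← sum_mul, ih, mul_comm]
      have hold : ∑ π : SetPartition n k, (X : ℤ[X]) ^ π.appendNewBlock.makSet A
          = X ^ k * qStirling n k := by
        simp only [makSet_appendNewBlock, pow_add]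
        rw [← sum_mul, ih, mul_comm]
      rw [sum_univ_succ_succ, hnew, hold, qStirling, add_comm]

end SetPartition

/-- For all integers `n ≥ k ≥ 1` and every `l` with `1 ≤ l ≤ k`, the
generating function of the statistic `mak_l(π) = mak(π) - nrinv(g(B_l),π) + k - l` over
`P(n,k)` equals the `q`-Stirling number `S_q(n,k)`, for every real `q > 0`. -/
theorem makl_generating_function (n k : ℕ)
    (l : ℕ) (hl : 1 ≤ l) (hlk : l ≤ k) (q : ℝ) :
    ∑ π : SetPartition n k,
        q ^ ((π.mak : ℤ) - (π.nrinv (π.blockMax ⟨l - 1, by omega⟩) : ℤ) + (k : ℤ) - (l : ℤ))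
      = Polynomial.aeval q (qStirling n k) := by
  set c : Fin k := ⟨l - 1, by omega⟩
  have hexp (π : SetPartition n k) :
      (π.mak : ℤ) - π.nrinv (π.blockMax c) + k - l = π.makSet {c} := by
    have hc : (c : ℕ) = l - 1 := rfl
    rw [SetPartition.makSet_singleton]
    omega
  simp only [hexp, zpow_natCast, ← SetPartition.sum_X_pow_makSet n k {c}, map_sum, map_pow,
    aeval_X]
end

section
/- For all integers n ≥ k ≥ 1 and every π ∈ P(n,k): mak(π) = Σ_{i ∈ F_s(π) ∪ P(π)} (l_i(π) − γ_i(π)) + Σ_{i=1}^{n} #{a ∈ F(π) : a < i}. -/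
open Finset Polynomial

/-!
Everything is counted by blocks. `w` maps the openers, and likewise the closers, bijectively onto
the blocks, and an opener (closer) precedes `i` iff its block has started (is complete) before `i`.
Hence `ros_i` counts the started blocks to the right of `w_i`, `lcs_i` the complete blocks to its
left, and `#{a ∈ F : a < i}` all complete blocks. At an opener every started block lies to the left
of `w_i`, so `ros_i + lcs_i = #{a ∈ F : a < i}`; at a non-opener, comparing the contribution of each
block gives `ros_i + lcs_i + γ_i = l_i + #{a ∈ F : a < i}`. Summing over `i` gives the formula.
-/

namespace SetPartition

variable {n k : ℕ} (π : SetPartition n k)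

def rosAt (i : Fin n) : ℕ := (π.openers.filter fun j => j < i ∧ π.w i < π.w j).card

def lcsAt (i : Fin n) : ℕ := (π.closers.filter fun j => j < i ∧ π.w j < π.w i).card

def Started (m : ℕ) (c : Fin k) : Prop := ∃ j : Fin n, (j : ℕ) < m ∧ π.w j = c

def CompleteAt (m : ℕ) (c : Fin k) : Prop := ∀ j : Fin n, π.w j = c → (j : ℕ) < m

instance (m : ℕ) : DecidablePred (π.Started m) := fun c =>
  inferInstanceAs (Decidable (∃ j : Fin n, (j : ℕ) < m ∧ π.w j = c))

instance (m : ℕ) : DecidablePred (π.CompleteAt m) := fun c =>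
  inferInstanceAs (Decidable (∀ j : Fin n, π.w j = c → (j : ℕ) < m))

variable {π}

lemma CompleteAt.started {m : ℕ} {c : Fin k} (h : π.CompleteAt m c) : π.Started m c := by
  obtain ⟨j, hj⟩ := π.surj c
  exact ⟨j, h j hj, hj⟩

lemma incompleteAt_iff {m : ℕ} {c : Fin k} :
    π.IncompleteAt m c ↔ π.Started m c ∧ ¬ π.CompleteAt m c := by
  simp only [IncompleteAt, Started, CompleteAt, not_forall, not_lt, exists_prop]
  exact and_congr_right fun _ => exists_congr fun _ => and_comm

/-- Blocks are opened in the order of their indices. -/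
lemma Started.of_lt {m : ℕ} {c c' : Fin k} (h' : π.Started m c') (h : c < c') :
    π.Started m c := by
  obtain ⟨j, hj, rfl⟩ := h'
  obtain ⟨j', hj', hw'⟩ := π.rgf j c h
  exact ⟨j', lt_trans hj' hj, hw'⟩

lemma not_completeAt_self (i : Fin n) : ¬ π.CompleteAt i (π.w i) :=
  fun h => lt_irrefl _ (h i rfl)

lemma started_self_of_notMem_openers {i : Fin n} (hi : i ∉ π.openers) :
    π.Started i (π.w i) := by
  simp only [openers, mem_filter, mem_univ, true_and, not_forall, not_not] at hi
  obtain ⟨j, hj, hw⟩ := hi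
  exact ⟨j, hj, hw⟩

lemma lt_of_started_of_mem_openers {i : Fin n} (hi : i ∈ π.openers) {c : Fin k}
    (hc : π.Started i c) : c < π.w i := by
  simp only [openers, mem_filter, mem_univ, true_and] at hi
  refine lt_of_not_ge fun hle => ?_
  obtain ⟨j, hj, hw⟩ := hle.lt_or_eq.elim hc.of_lt fun h => h ▸ hc
  exact hi j hj hw

lemma incompleteAt_succ_iff {i : Fin n} {c : Fin k} (hc : c ≠ π.w i) :
    π.IncompleteAt (i + 1) c ↔ π.IncompleteAt i c := by
  have hj (j : Fin n) (hjc : π.w j = c) : (j : ℕ) ≠ i :=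
    Fin.val_ne_of_ne fun h => hc (h ▸ hjc).symm
  simp only [IncompleteAt]
  exact and_congr (exists_congr fun j => and_congr_left fun hjc => by have := hj j hjc; omega)
    (exists_congr fun j => and_congr_left fun hjc => by have := hj j hjc; omega)

lemma exists_mem_openers (c : Fin k) : ∃ j ∈ π.openers, π.w j = c := by
  obtain ⟨j, hj, hmin⟩ := (univ.filter fun j => π.w j = c).exists_min_image id
    (let ⟨j, hj⟩ := π.surj c; ⟨j, by simpa using hj⟩)
  simp only [mem_filter, mem_univ, true_and, id] at hj hmin
  refine ⟨j, ?_, hj⟩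
  simp only [openers, mem_filter, mem_univ, true_and]
  exact fun j' hj' hw => absurd (hmin j' (hw.trans hj)) (not_le.2 hj')

lemma exists_mem_closers (c : Fin k) : ∃ j ∈ π.closers, π.w j = c := by
  obtain ⟨j, hj, hmax⟩ := (univ.filter fun j => π.w j = c).exists_max_image id
    (let ⟨j, hj⟩ := π.surj c; ⟨j, by simpa using hj⟩)
  simp only [mem_filter, mem_univ, true_and, id] at hj hmax
  refine ⟨j, ?_, hj⟩
  simp only [closers, mem_filter, mem_univ, true_and]
  exact fun j' hj' hw => absurd (hmax j' (hw.trans hj)) (not_le.2 hj')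

lemma injOn_w_openers_s5 : Set.InjOn π.w π.openers := by
  intro a ha b hb h
  simp only [mem_coe, openers, mem_filter, mem_univ, true_and] at ha hb
  rcases lt_trichotomy a b with h' | h' | h'
  · exact absurd h (hb a h')
  · exact h'
  · exact absurd h.symm (ha b h')

lemma injOn_w_closers_s5 : Set.InjOn π.w π.closers := by
  intro a ha b hb h
  simp only [mem_coe, closers, mem_filter, mem_univ, true_and] at ha hb
  rcases lt_trichotomy a b with h' | h' | h'
  · exact absurd h.symm (ha b h')
  · exact h'
  · exact absurd h (hb a h')

lemma card_filter_openers (P : Fin k → Prop) [DecidablePred P] :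
    (π.openers.filter fun j => P (π.w j)).card = (univ.filter P).card :=
  card_nbij π.w (fun j hj => by simp_all)
    (injOn_w_openers_s5.mono fun _ hj => (mem_filter.1 hj).1)
    (fun c hc => by
      obtain ⟨j, hj, rfl⟩ := π.exists_mem_openers c
      exact ⟨j, mem_filter.2 ⟨hj, (mem_filter.1 hc).2⟩, rfl⟩)

lemma card_filter_closers (P : Fin k → Prop) [DecidablePred P] :
    (π.closers.filter fun j => P (π.w j)).card = (univ.filter P).card :=
  card_nbij π.w (fun j hj => by simp_all)
    (injOn_w_closers_s5.mono fun _ hj => (mem_filter.1 hj).1)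
    (fun c hc => by
      obtain ⟨j, hj, rfl⟩ := π.exists_mem_closers c
      exact ⟨j, mem_filter.2 ⟨hj, (mem_filter.1 hc).2⟩, rfl⟩)

lemma lt_iff_started_of_mem_openers {j : Fin n} (hj : j ∈ π.openers) (i : Fin n) :
    j < i ↔ π.Started i (π.w j) := by
  refine ⟨fun h => ⟨j, h, rfl⟩, fun ⟨j', hj', hw⟩ => ?_⟩
  simp only [openers, mem_filter, mem_univ, true_and] at hj
  exact lt_of_le_of_lt (not_lt.1 fun h => hj j' h hw) hj'

lemma lt_iff_completeAt_of_mem_closers {j : Fin n} (hj : j ∈ π.closers) (i : Fin n) :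
    j < i ↔ π.CompleteAt i (π.w j) := by
  refine ⟨fun h j' hw => ?_, fun h => h j rfl⟩
  simp only [closers, mem_filter, mem_univ, true_and] at hj
  exact lt_of_le_of_lt (not_lt.1 fun h' => hj j' h' hw) h

lemma rosAt_eq (i : Fin n) :
    π.rosAt i = (univ.filter fun c => π.Started i c ∧ π.w i < c).card := by
  rw [rosAt, ← card_filter_openers]
  exact congrArg card (filter_congr fun j hj => by rw [lt_iff_started_of_mem_openers hj])

lemma lcsAt_eq (i : Fin n) :
    π.lcsAt i = (univ.filter fun c => π.CompleteAt i c ∧ c < π.w i).card := by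
  rw [lcsAt, ← card_filter_closers]
  exact congrArg card (filter_congr fun j hj => by rw [lt_iff_completeAt_of_mem_closers hj])

lemma card_closers_lt (i : Fin n) :
    (π.closers.filter fun a => a < i).card = (univ.filter fun c => π.CompleteAt i c).card := by
  rw [← card_filter_closers]
  exact congrArg card (filter_congr fun j hj => lt_iff_completeAt_of_mem_closers hj i)

lemma rosAt_add_lcsAt_of_mem_openers {i : Fin n} (hi : i ∈ π.openers) :
    π.rosAt i + π.lcsAt i = (π.closers.filter fun a => a < i).card := by
  have hlt := fun c => lt_of_started_of_mem_openers hi (c := c)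
  rw [rosAt_eq, lcsAt_eq, card_closers_lt,
    filter_false_of_mem fun c _ h => (hlt c h.1).not_gt h.2,
    filter_congr fun c _ => and_iff_left_of_imp fun h => hlt c h.started]
  simp

/-- The contribution of block `c` to both sides of `rosAt_add_lcsAt_add_gammaTrace`. -/
lemma blockwise_count_of_notMem_openers {i : Fin n} (hi : i ∉ π.openers) (c : Fin k) :
    ((if π.Started i c ∧ π.w i < c then 1 else 0)
      + (if π.CompleteAt i c ∧ c < π.w i then 1 else 0)
      + ((if c = π.w i then 1 else 0) + if π.IncompleteAt (i + 1) c ∧ c < π.w i then 1 else 0)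
      : ℕ)
      = (if π.IncompleteAt i c then 1 else 0) + if π.CompleteAt i c then 1 else 0 := by
  have hself := started_self_of_notMem_openers hi
  rcases lt_trichotomy c (π.w i) with h | rfl | h
  · have hS := hself.of_lt h
    simp only [incompleteAt_succ_iff h.ne, incompleteAt_iff, hS, h, h.ne, not_lt_of_gt h]
    split_ifs <;> simp_all
  · simp [incompleteAt_iff, hself, not_completeAt_self]
  · have hC : π.CompleteAt i c → π.Started i c := CompleteAt.started
    simp only [incompleteAt_iff, h, h.ne', not_lt_of_gt h]
    split_ifs <;> simp_all

lemma rosAt_add_lcsAt_add_gammaTrace {i : Fin n} (hi : i ∉ π.openers) :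
    π.rosAt i + π.lcsAt i + π.gammaTrace i
      = π.lTrace i + (π.closers.filter fun a => a < i).card := by
  have key := sum_congr rfl fun c (_ : c ∈ univ) => blockwise_count_of_notMem_openers hi c
  simp only [sum_add_distrib, ← card_filter, sum_ite_eq', mem_univ, if_true] at key
  rw [rosAt_eq, lcsAt_eq, card_closers_lt, gammaTrace, lTrace]
  omega

lemma rosAt_add_lcsAt (i : Fin n) :
    ((π.rosAt i + π.lcsAt i : ℕ) : ℤ)
      = (if i ∈ π.openers then 0 else (π.lTrace i : ℤ) - π.gammaTrace i)
        + (π.closers.filter fun a => a < i).card := by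
  split_ifs with hi
  · simp [rosAt_add_lcsAt_of_mem_openers hi]
  · have := rosAt_add_lcsAt_add_gammaTrace hi
    omega

lemma closersOnly_union_transients :
    π.closersOnly ∪ π.transients = univ.filter (· ∉ π.openers) := by
  ext i
  simp only [closersOnly, transients, mem_union, mem_sdiff, mem_filter, mem_univ, true_and]
  tauto

end SetPartition

theorem mak_eq_trace_formula_general (n k : ℕ) (π : SetPartition n k) :
    (π.mak : ℤ) =
      (∑ i ∈ π.closersOnly ∪ π.transients, ((π.lTrace i : ℤ) - (π.gammaTrace i : ℤ))) +
      ∑ i : Fin n, ((π.closers.filter fun a => a < i).card : ℤ) := by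
  have hmak : π.mak = ∑ i, (π.rosAt i + π.lcsAt i) := (sum_add_distrib).symm
  rw [hmak, Nat.cast_sum]
  simp only [SetPartition.rosAt_add_lcsAt, sum_add_distrib, sum_ite, sum_const_zero, zero_add,
    SetPartition.closersOnly_union_transients]

/-- For all integers `n ≥ k ≥ 1` and every `π ∈ P(n,k)`:
`mak(π) = Σ_{i ∈ F_s(π) ∪ P(π)} (l_i(π) - γ_i(π)) + Σ_{i=1}^n #{a ∈ F(π) : a < i}`. -/
theorem mak_eq_trace_formula (n k : ℕ) (hk : 1 ≤ k) (hkn : k ≤ n) (π : SetPartition n k) :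
    (π.mak : ℤ) =
      (∑ i ∈ π.closersOnly ∪ π.transients, ((π.lTrace i : ℤ) - (π.gammaTrace i : ℤ))) +
      ∑ i : Fin n, ((π.closers.filter fun a => a < i).card : ℤ) :=
  mak_eq_trace_formula_general n k π
end

section
/- For all integers n ≥ k ≥ 1 and every π ∈ P(n,k), there exists a bijection ψ from O_s(π) onto F_s(π) such that l_{ψ(a)}(π) = l_a(π) + 1 for every a ∈ O_s(π). -/
/-!
Let `L m` be the number of blocks incomplete at stage `m`, so that `L 0 = L n = 0`. Passing an
element moves `L` up by one at an opener that is not a closer, down by one at a closer that is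
not an opener, and leaves it unchanged otherwise. A walk that returns to its starting height
crosses each edge `h — h + 1` as often upwards as downwards, so for every `h` the openers-only
at height `h` and the closers-only at height `h + 1` are equinumerous; matching them height by
height gives `ψ`.
-/

open Finset Polynomial

theorem card_filter_upcrossing_eq_card_filter_downcrossing {α : Type*} [LinearOrder α]
    (f : ℕ → α) {n : ℕ} (hf : f 0 = f n) (a : α) :
    #{i : Fin n | f i ≤ a ∧ a < f (i + 1)} = #{i : Fin n | f (i + 1) ≤ a ∧ a < f i} := by
  set above : ℕ → ℤ := fun m => if a < f m then 1 else 0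
  have step (i : Fin n) : above (i + 1) - above i =
      (if f i ≤ a ∧ a < f (i + 1) then 1 else 0) - if f (i + 1) ≤ a ∧ a < f i then 1 else 0 := by
    simp only [above]
    split_ifs <;> grind
  have telescope := Fin.sum_univ_eq_sum_range (fun m => above (m + 1) - above m) n
  rw [sum_range_sub, show above n = above 0 by simp only [above, hf], sub_self] at telescope
  simp only [step, sum_sub_distrib, sum_boole, sub_eq_zero] at telescope
  exact_mod_cast telescope

theorem Finset.exists_bijOn_of_card_filter_eq {α β γ : Type*} [Nonempty β] [DecidableEq γ]
    {s : Finset α} {t : Finset β} {f : α → γ} {g : β → γ}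
    (h : ∀ c, #{a ∈ s | f a = c} = #{b ∈ t | g b = c}) :
    ∃ ψ : α → β, Set.BijOn ψ s t ∧ ∀ a ∈ s, g (ψ a) = f a := by
  have fiber (c : γ) : ∃ ψ : α → β, Set.BijOn ψ ↑{a ∈ s | f a = c} ↑{b ∈ t | g b = c} :=
    (finite_toSet _).exists_bijOn_of_encard_eq (by simp only [Set.encard_coe_eq_coe_finsetCard, h])
  choose ψ hψ using fiber
  have maps {a} (ha : a ∈ s) : ψ (f a) a ∈ t ∧ g (ψ (f a) a) = f a := by
    simpa using (hψ (f a)).mapsTo (by simpa using ha)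
  refine ⟨fun a => ψ (f a) a, ⟨fun a ha => (maps ha).1, fun a ha a' ha' (he : ψ (f a) a = ψ (f a') a') => ?_, fun b hb => ?_⟩,
    fun a ha => (maps ha).2⟩
  · have hfa : f a = f a' := by rw [← (maps ha).2, ← (maps ha').2, he]
    exact (hψ (f a)).injOn (by simpa using ha) (by simpa [hfa] using ha') (by simpa [hfa] using he)
  · have hb' : b ∈ (↑{x ∈ t | g x = g b} : Set β) := by simpa using hb
    obtain ⟨a, ha, hab⟩ := (hψ (g b)).surjOn hb'
    simp only [coe_filter, Set.mem_ofPred_eq] at ha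
    exact ⟨a, ha.1, by simp only [ha.2, hab]⟩

namespace SetPartition

variable {n k : ℕ} (π : SetPartition n k)

/-- `lTrace` extended to all stages `m : ℕ`, including the final stage `n`. -/
def numIncomplete (m : ℕ) : ℕ := #{c | π.IncompleteAt m c}

theorem lTrace_eq_numIncomplete (i : Fin n) : π.lTrace i = π.numIncomplete i := rfl

@[simp]
theorem numIncomplete_zero : π.numIncomplete 0 = 0 := by
  simp [numIncomplete, IncompleteAt]

@[simp]
theorem numIncomplete_self : π.numIncomplete n = 0 := by
  simp [numIncomplete, IncompleteAt]

theorem incompleteAt_self_iff (i : Fin n) : π.IncompleteAt i (π.w i) ↔ i ∉ π.openers := by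
  simp only [IncompleteAt, openers, mem_filter, mem_univ, true_and, not_forall, not_not]
  exact ⟨fun ⟨⟨j, hj, hw⟩, _⟩ => ⟨j, hj, hw⟩, fun ⟨j, hj, hw⟩ => ⟨⟨j, hj, hw⟩, i, le_rfl, rfl⟩⟩

theorem incompleteAt_succ_self_iff (i : Fin n) :
    π.IncompleteAt (i + 1) (π.w i) ↔ i ∉ π.closers := by
  simp only [IncompleteAt, closers, mem_filter, mem_univ, true_and, not_forall, not_not]
  exact ⟨fun ⟨_, j, hj, hw⟩ => ⟨j, hj, hw⟩, fun ⟨j, hj, hw⟩ => ⟨⟨i, by omega, rfl⟩, j, hj, hw⟩⟩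

theorem incompleteAt_succ_iff_of_ne {i : Fin n} {c : Fin k} (hc : π.w i ≠ c) :
    π.IncompleteAt (i + 1) c ↔ π.IncompleteAt i c := by
  have hj {j : Fin n} (hj : π.w j = c) : (j : ℕ) ≠ i := fun h => hc (Fin.ext h ▸ hj)
  simp only [IncompleteAt]
  exact ⟨fun ⟨⟨j, hji, hwj⟩, l, hil, hwl⟩ => ⟨⟨j, by grind, hwj⟩, l, by omega, hwl⟩,
    fun ⟨⟨j, hji, hwj⟩, l, hil, hwl⟩ => ⟨⟨j, by omega, hwj⟩, l, by grind, hwl⟩⟩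

theorem natCast_numIncomplete_succ (i : Fin n) :
    (π.numIncomplete (i + 1) : ℤ) =
      π.numIncomplete i + (if i ∈ π.closers then 0 else 1) - if i ∈ π.openers then 0 else 1 := by
  have hsum : (π.numIncomplete (i + 1) : ℤ) - π.numIncomplete i =
      (if π.IncompleteAt (i + 1) (π.w i) then 1 else 0) -
        if π.IncompleteAt i (π.w i) then 1 else 0 := by
    simp only [numIncomplete, card_filter]
    push_cast
    rw [← sum_sub_distrib]
    -- only the block of `i` can change status between stages `i` and `i + 1`
    exact Fintype.sum_eq_single (π.w i) fun c hc => by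
      simp only [π.incompleteAt_succ_iff_of_ne (Ne.symm hc), sub_self]
  simp only [π.incompleteAt_succ_self_iff, π.incompleteAt_self_iff] at hsum
  split_ifs at hsum ⊢ <;> omega

theorem upcrossing_iff_mem_openersOnly (i : Fin n) (h : ℕ) :
    π.numIncomplete i ≤ h ∧ h < π.numIncomplete (i + 1) ↔
      i ∈ π.openersOnly ∧ π.lTrace i = h := by
  have step := π.natCast_numIncomplete_succ i
  simp only [openersOnly, mem_sdiff, lTrace_eq_numIncomplete]
  split_ifs at step <;> grind

theorem downcrossing_iff_mem_closersOnly (i : Fin n) (h : ℕ) :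
    π.numIncomplete (i + 1) ≤ h ∧ h < π.numIncomplete i ↔
      i ∈ π.closersOnly ∧ π.lTrace i = h + 1 := by
  have step := π.natCast_numIncomplete_succ i
  simp only [closersOnly, mem_sdiff, lTrace_eq_numIncomplete]
  split_ifs at step <;> grind

theorem card_filter_openersOnly_lTrace_eq (h : ℕ) :
    #{a ∈ π.openersOnly | π.lTrace a = h} = #{b ∈ π.closersOnly | π.lTrace b = h + 1} := by
  have := card_filter_upcrossing_eq_card_filter_downcrossing π.numIncomplete (n := n) (by simp) h
  simp only [upcrossing_iff_mem_openersOnly, downcrossing_iff_mem_closersOnly] at this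
  rwa [← filter_filter, ← filter_filter, filter_univ_mem, filter_univ_mem] at this

theorem lTrace_pos_of_mem_closersOnly {b : Fin n} (hb : b ∈ π.closersOnly) :
    0 < π.lTrace b := by
  have step := π.natCast_numIncomplete_succ b
  simp only [closersOnly, mem_sdiff] at hb
  simp only [hb.1, hb.2, if_true, if_false] at step
  rw [lTrace_eq_numIncomplete]
  omega

end SetPartition

/-- For all integers `n ≥ k ≥ 1` and every `π ∈ P(n,k)`, there is a
bijection `ψ` from `O_s(π)` onto `F_s(π)` such that `l_{ψ(a)}(π) = l_a(π) + 1` for every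
`a ∈ O_s(π)`. -/
theorem exists_bijOn_openersOnly_closersOnly (n k : ℕ) (hk : 1 ≤ k) (hkn : k ≤ n)
    (π : SetPartition n k) :
    ∃ ψ : Fin n → Fin n,
      Set.BijOn ψ ↑π.openersOnly ↑π.closersOnly ∧
      ∀ a ∈ π.openersOnly, π.lTrace (ψ a) = π.lTrace a + 1 := by
  have : Nonempty (Fin n) := ⟨⟨0, by omega⟩⟩
  refine exists_bijOn_of_card_filter_eq fun c => ?_
  rcases c with _ | h
  · simpa [eq_comm (a := 0), filter_eq_empty_iff] using
      fun b (hb : b ∈ π.closersOnly) => (π.lTrace_pos_of_mem_closersOnly hb).ne'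
  · simpa using π.card_filter_openersOnly_lTrace_eq h
end
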